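/- arXiv:0907.1122 — 5 statements merged into one kernel-verified Lean document; each statement's English description precedes it below -/
import Mathlib

section
/- Let n ≥ 2 and 1 ≤ k ≤ n, and let 0 ≤ m ≤ k-1. If a₁, b₁, a₂, b₂ are nonnegative integers with a₁·n + b₁·(n-1) + m = (2n-k)(n-1) = a₂·n + b₂·(n-1) + m, and additionally a₁ ≥ 1 when m = 0, a₂ ≥ 1 when m = 0, then a₁ = a₂ and b₁ = b₂. -/
/-!
Write `d = n - 1`. Since `a * (d + 1) + b * d + m = (a + b) * d + (a + m)`, the number `a + m` is a
multiple `c * d` of `d`, positive by the hypothesis on `m = 0`; and `m < k` bounds it by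
`2 * d + 1 - c`, which forces `c = 1`. So `a = d - m` is determined, and then so is `b`.
-/

lemma add_eq_of_decomposition {d k m a b : ℕ} (hd : 0 < d) (hmk : m < k)
    (h : a * (d + 1) + b * d + m = (2 * (d + 1) - k) * d) (ha : m = 0 → 1 ≤ a) :
    a + m = d := by
  have hsplit : (a + b) * d + (a + m) = (2 * (d + 1) - k) * d := by rw [← h]; ring
  obtain ⟨c, hc⟩ : d ∣ a + m :=
    (Nat.dvd_add_right (dvd_mul_left d (a + b))).mp (hsplit ▸ dvd_mul_left d _)
  have hcount : a + b + c = 2 * (d + 1) - k := by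
    refine Nat.eq_of_mul_eq_mul_right hd ?_
    rw [add_mul, ← hsplit, hc, mul_comm c]
  have hc_pos : 0 < c := Nat.pos_of_ne_zero (by rintro rfl; omega)
  have hc_lt : c < 2 := by
    refine Nat.lt_of_mul_lt_mul_left (a := d + 1) ?_
    have : (d + 1) * c = a + m + c := by rw [add_mul, one_mul, ← hc]
    omega
  rw [hc, show c = 1 by omega, mul_one]

theorem unique_decomposition_D1_general (n k m : ℕ) (hn : 2 ≤ n) (hk1 : 1 ≤ k)
    (hm : m ≤ k - 1) (a₁ b₁ a₂ b₂ : ℕ)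
    (h₁ : a₁ * n + b₁ * (n - 1) + m = (2 * n - k) * (n - 1))
    (h₂ : a₂ * n + b₂ * (n - 1) + m = (2 * n - k) * (n - 1))
    (ha₁ : m = 0 → 1 ≤ a₁) (ha₂ : m = 0 → 1 ≤ a₂) :
    a₁ = a₂ ∧ b₁ = b₂ := by
  obtain ⟨d, rfl⟩ : ∃ d, n = d + 1 := ⟨n - 1, by omega⟩
  simp only [Nat.add_sub_cancel] at h₁ h₂
  have hd : 0 < d := by omega
  have hmk : m < k := by omega
  have ha : a₁ = a₂ := by
    have := add_eq_of_decomposition hd hmk h₁ ha₁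
    have := add_eq_of_decomposition hd hmk h₂ ha₂
    omega
  subst ha
  exact ⟨rfl, Nat.eq_of_mul_eq_mul_right hd (by omega)⟩

/-- Any two decompositions of `(2n-k)(n-1) - m` into cycles of lengths `n` and `n-1`
(with at least one `n`-cycle when `m = 0`) use the same numbers of each length. -/
theorem unique_decomposition_D1 (n k m : ℕ) (hn : 2 ≤ n) (hk1 : 1 ≤ k) (hkn : k ≤ n)
    (hm : m ≤ k - 1) (a₁ b₁ a₂ b₂ : ℕ)
    (h₁ : a₁ * n + b₁ * (n - 1) + m = (2 * n - k) * (n - 1))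
    (h₂ : a₂ * n + b₂ * (n - 1) + m = (2 * n - k) * (n - 1))
    (ha₁ : m = 0 → 1 ≤ a₁) (ha₂ : m = 0 → 1 ≤ a₂) :
    a₁ = a₂ ∧ b₁ = b₂ :=
  unique_decomposition_D1_general n k m hn hk1 hm a₁ b₁ a₂ b₂ h₁ h₂ ha₁ ha₂
end

section
/- Let n ≥ 2 and 1 ≤ k ≤ n. Suppose a₁, b₁, a₂, b₂ are nonnegative integers and m is an integer with either m = n-1 or 0 ≤ m ≤ k-2, such that a₁·n + b₁·(n-1) + m = (2n-k)(n-1) - 1 = a₂·n + b₂·(n-1) + m. Then b₁ = b₂ (and hence a₁ = a₂). -/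
/-!
Reducing `a * n + b * (n - 1) = N` modulo `n` gives `b ≡ -N (mod n)`. If `r ∈ [0, n)` is that
residue, the next candidate `r + n` is already too large whenever `N < (r + n) * (n - 1)`, so
`b = r` and then `a` is determined as well. For the lengths `N = (2n - k)(n - 1) - 1 - m` this
inequality holds, with `r = n - k` when `m = n - 1` and `r = n + m + 1 - k` when `m ≤ k - 2`.
-/

theorem eq_of_mul_add_mul_sub_one_eq {n N a b r : ℤ} (ha : 0 ≤ a) (hb : 0 ≤ b)
    (hr : r ≡ -N [ZMOD n]) (hr0 : 0 ≤ r) (hrn : r < n) (hN : N < (r + n) * (n - 1))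
    (h : a * n + b * (n - 1) = N) : b = r := by
  have hbN : b ≡ -N [ZMOD n] := Int.modEq_iff_dvd.2 ⟨-(a + b), by linear_combination h⟩
  have hlt : b < r + n := by
    refine lt_of_mul_lt_mul_right ?_ (by linarith : (0 : ℤ) ≤ n - 1)
    nlinarith [mul_nonneg ha (by linarith : (0 : ℤ) ≤ n)]
  have hdiff : |b - r| < n := abs_sub_lt_iff.2 ⟨by linarith, by linarith⟩
  exact sub_eq_zero.1 (Int.eq_zero_of_abs_lt_dvd (hr.trans hbN.symm).dvd hdiff)

theorem exists_residue_lt_of_length {n k : ℕ} (hk1 : 1 ≤ k) (hkn : k ≤ n) {m : ℤ}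
    (hm : m = (n : ℤ) - 1 ∨ (0 ≤ m ∧ m ≤ (k : ℤ) - 2)) :
    ∃ r : ℤ, 0 ≤ r ∧ r < n ∧ r ≡ -((2 * (n : ℤ) - k) * ((n : ℤ) - 1) - 1 - m) [ZMOD n] ∧
      (2 * (n : ℤ) - k) * ((n : ℤ) - 1) - 1 - m < (r + n) * ((n : ℤ) - 1) := by
  have hk1' : (1 : ℤ) ≤ k := by exact_mod_cast hk1
  have hkn' : (k : ℤ) ≤ n := by exact_mod_cast hkn
  rcases hm with rfl | ⟨hm0, hmk⟩
  · refine ⟨n - k, by linarith, by linarith, Int.modEq_iff_dvd.2 ⟨2 - 2 * n + k, by ring⟩, ?_⟩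
    nlinarith
  · refine ⟨n + m + 1 - k, by linarith, by linarith,
      Int.modEq_iff_dvd.2 ⟨1 - 2 * n + k, by ring⟩, ?_⟩
    nlinarith

theorem unique_decomposition_D2_general (n k : ℕ) (hk1 : 1 ≤ k) (hkn : k ≤ n)
    (m : ℤ) (hm : m = (n : ℤ) - 1 ∨ (0 ≤ m ∧ m ≤ (k : ℤ) - 2)) (a₁ b₁ a₂ b₂ : ℕ)
    (h₁ : (a₁ : ℤ) * n + (b₁ : ℤ) * ((n : ℤ) - 1) + m =
      (2 * (n : ℤ) - k) * ((n : ℤ) - 1) - 1)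
    (h₂ : (a₂ : ℤ) * n + (b₂ : ℤ) * ((n : ℤ) - 1) + m =
      (2 * (n : ℤ) - k) * ((n : ℤ) - 1) - 1) :
    b₁ = b₂ ∧ a₁ = a₂ := by
  obtain ⟨r, hr0, hrn, hr, hN⟩ := exists_residue_lt_of_length hk1 hkn hm
  have hb₁ : (b₁ : ℤ) = r :=
    eq_of_mul_add_mul_sub_one_eq (a := a₁) (by positivity) (by positivity) hr hr0 hrn hN
      (by linarith)
  have hb₂ : (b₂ : ℤ) = r :=
    eq_of_mul_add_mul_sub_one_eq (a := a₂) (by positivity) (by positivity) hr hr0 hrn hN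
      (by linarith)
  have hb : b₁ = b₂ := by exact_mod_cast hb₁.trans hb₂.symm
  subst hb
  have ha : (a₁ : ℤ) * n = a₂ * n := by linarith
  exact ⟨rfl, by exact_mod_cast mul_right_cancel₀ (by omega : (n : ℤ) ≠ 0) ha⟩

/-- Any two decompositions of `(2n-k)(n-1) - 1 - m` into cycles of lengths `n` and
`n-1`, for `m = n-1` or `0 ≤ m ≤ k-2`, use the same numbers of each length. -/
theorem unique_decomposition_D2 (n k : ℕ) (hn : 2 ≤ n) (hk1 : 1 ≤ k) (hkn : k ≤ n)
    (m : ℤ) (hm : m = (n : ℤ) - 1 ∨ (0 ≤ m ∧ m ≤ (k : ℤ) - 2)) (a₁ b₁ a₂ b₂ : ℕ)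
    (h₁ : (a₁ : ℤ) * n + (b₁ : ℤ) * ((n : ℤ) - 1) + m =
      (2 * (n : ℤ) - k) * ((n : ℤ) - 1) - 1)
    (h₂ : (a₂ : ℤ) * n + (b₂ : ℤ) * ((n : ℤ) - 1) + m =
      (2 * (n : ℤ) - k) * ((n : ℤ) - 1) - 1) :
    b₁ = b₂ ∧ a₁ = a₂ :=
  unique_decomposition_D2_general n k hk1 hkn m hm a₁ b₁ a₂ b₂ h₁ h₂
end

section
/- Let S be a primitive non-powerful signed digraph of order n with underlying digraph D, and suppose there is a pair of SSSD walks of length r from a vertex u to a vertex v. Then for every 1 ≤ k ≤ n, L(S,k) ≤ F(D,k) + d(D) + r, where d(D) is the diameter of D. -/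
/-- There is a walk of length `l` from `u` to `v` in the digraph with arc relation `A`. -/
def HasWalk {n : ℕ} (A : Fin n → Fin n → Prop) (u v : Fin n) (l : ℕ) : Prop :=
  ∃ f : ℕ → Fin n, f 0 = u ∧ f l = v ∧ ∀ i < l, A (f i) (f (i + 1))

/-- A digraph is primitive if for some `p > 0` every ordered pair of vertices is
joined by a walk of length exactly `p`. -/
def Primitive {n : ℕ} (A : Fin n → Fin n → Prop) : Prop :=
  ∃ p, 0 < p ∧ ∀ u v : Fin n, HasWalk A u v p

/-- `f` is the vertex sequence of a walk of length `l` from `u` to `v` in `A`. -/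
def IsWalkSeq {n : ℕ} (A : Fin n → Fin n → Prop) (f : ℕ → Fin n) (u v : Fin n) (l : ℕ) : Prop :=
  f 0 = u ∧ f l = v ∧ ∀ i < l, A (f i) (f (i + 1))

/-- The sign of (the length-`l` initial part of) the walk with vertex sequence `f`
in the signed digraph `S`. -/
def walkSign {n : ℕ} (S : Fin n → Fin n → ℤ) (f : ℕ → Fin n) (l : ℕ) : ℤ :=
  ∏ i ∈ Finset.range l, S (f i) (f (i + 1))

/-- The underlying digraph of a signed digraph `S`. -/
def Underlying {n : ℕ} (S : Fin n → Fin n → ℤ) : Fin n → Fin n → Prop :=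
  fun u v => S u v ≠ 0

/-- All entries of `S` are in `{0, 1, -1}`: `S` is a sign pattern / signed digraph. -/
def SignPattern {n : ℕ} (S : Fin n → Fin n → ℤ) : Prop :=
  ∀ u v, S u v = 0 ∨ S u v = 1 ∨ S u v = -1

/-- There is a pair of SSSD walks of length `l` from `u` to `v`: two walks with the
same endpoints and length but different signs. -/
def HasSSSD {n : ℕ} (S : Fin n → Fin n → ℤ) (u v : Fin n) (l : ℕ) : Prop :=
  ∃ f g : ℕ → Fin n, IsWalkSeq (Underlying S) f u v l ∧ IsWalkSeq (Underlying S) g u v l ∧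
    walkSign S f l ≠ walkSign S g l

/-- A signed digraph is non-powerful iff it contains a pair of SSSD walks. -/
def NonPowerful {n : ℕ} (S : Fin n → Fin n → ℤ) : Prop :=
  ∃ u v l, HasSSSD S u v l

/-- `exp_D(X)`: the least `p` such that every vertex is reachable from some vertex
of `X` by a walk of length exactly `p`. -/
noncomputable def setExp {n : ℕ} (A : Fin n → Fin n → Prop) (X : Finset (Fin n)) : ℕ :=
  sInf {p | ∀ v, ∃ x ∈ X, HasWalk A x v p}

/-- `F(D,k)`: the `k`th upper multiexponent. -/
noncomputable def upperMultiexp {n : ℕ} (A : Fin n → Fin n → Prop) (k : ℕ) : ℕ :=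
  sSup {e | ∃ X : Finset (Fin n), X.card = k ∧ setExp A X = e}

/-- `l_S(X)`: the least `p` such that every vertex admits a pair of SSSD walks of
length `p` from some vertex of `X`. -/
noncomputable def setBase {n : ℕ} (S : Fin n → Fin n → ℤ) (X : Finset (Fin n)) : ℕ :=
  sInf {p | ∀ v, ∃ x ∈ X, HasSSSD S x v p}

/-- `L(S,k)`: the `k`th upper base. -/
noncomputable def upperBase {n : ℕ} (S : Fin n → Fin n → ℤ) (k : ℕ) : ℕ :=
  sSup {e | ∃ X : Finset (Fin n), X.card = k ∧ setBase S X = e}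

/-- Distance from `u` to `v` in the digraph `A`. -/
noncomputable def ddist {n : ℕ} (A : Fin n → Fin n → Prop) (u v : Fin n) : ℕ :=
  sInf {l | HasWalk A u v l}

/-- Diameter of the digraph `A`. -/
noncomputable def diam {n : ℕ} (A : Fin n → Fin n → Prop) : ℕ :=
  sSup {d | ∃ u v : Fin n, ddist A u v = d}

/-- `f` is the vertex sequence of a cycle of length `p` in `A`: a closed walk of
length `p` whose first `p` vertices are pairwise distinct. -/
def IsCycleSeq {n : ℕ} (A : Fin n → Fin n → Prop) (f : ℕ → Fin n) (p : ℕ) : Prop :=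
  0 < p ∧ f p = f 0 ∧ (∀ i < p, A (f i) (f (i + 1))) ∧
    ∀ i < p, ∀ j < p, f i = f j → i = j

/-- The digraph `D₁` on `{1,…,n}` (vertex `i` is index `i-1`): the Hamiltonian cycle
`1→2→⋯→n→1` together with the extra arc `(n-1)→1`. -/
def D1 (n : ℕ) : Fin n → Fin n → Prop := fun u v =>
  (v.val = u.val + 1) ∨ (u.val = n - 1 ∧ v.val = 0) ∨ (u.val = n - 2 ∧ v.val = 0)

/-- The digraph `D₂`: `D₁` together with the extra arc `(n)→2`. -/
def D2 (n : ℕ) : Fin n → Fin n → Prop := fun u v =>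
  D1 n u v ∨ (u.val = n - 1 ∧ v.val = 1)

/-- Isomorphism of digraphs on the same vertex set `Fin n`. -/
def DigraphIso {n : ℕ} (A B : Fin n → Fin n → Prop) : Prop :=
  ∃ e : Fin n ≃ Fin n, ∀ u v, A u v ↔ B (e u) (e v)

/-!
Fix `X` with `|X| = k`. Every vertex is reached from `X` by walks of length exactly `exp_D(X)`,
and, since every vertex of a primitive digraph has an in-neighbour, also of every larger length.
Given a target `w`, choose `x ∈ X` with a walk `x → u` of length `exp_D(X) + d(D) - d(v, w)`,
follow it by the SSSD pair `u → v` and then by a shortest walk `v → w`: prefixing and suffixing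
a common walk keeps the two signs different, so this is an SSSD pair of length
`exp_D(X) + d(D) + r ≤ F(D, k) + d(D) + r` from `x` to `w`.
-/

section SeqAppend

variable {α : Type*} (f g : ℕ → α) (l : ℕ)

def seqAppend : ℕ → α := fun i => if i ≤ l then f i else g (i - l)

lemma seqAppend_of_le {i : ℕ} (hi : i ≤ l) : seqAppend f g l i = f i := if_pos hi

lemma seqAppend_add (hfg : f l = g 0) (j : ℕ) : seqAppend f g l (l + j) = g j := by
  unfold seqAppend
  split_ifs with h
  · obtain rfl : j = 0 := by omega
    simpa using hfg
  · simp

end SeqAppend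

section Walks

variable {n : ℕ} {A : Fin n → Fin n → Prop}

lemma IsWalkSeq.append {f g : ℕ → Fin n} {a b c : Fin n} {l₁ l₂ : ℕ}
    (hf : IsWalkSeq A f a b l₁) (hg : IsWalkSeq A g b c l₂) :
    IsWalkSeq A (seqAppend f g l₁) a c (l₁ + l₂) := by
  obtain ⟨hf0, hfl, hfA⟩ := hf
  obtain ⟨hg0, hgl, hgA⟩ := hg
  have hfg : f l₁ = g 0 := hfl.trans hg0.symm
  refine ⟨by rw [seqAppend_of_le _ _ _ l₁.zero_le, hf0], by rw [seqAppend_add _ _ _ hfg, hgl],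
    fun i hi => ?_⟩
  rcases Nat.lt_or_ge i l₁ with hi₁ | hi₁
  · rw [seqAppend_of_le _ _ _ hi₁.le, seqAppend_of_le _ _ _ hi₁]
    exact hfA i hi₁
  · obtain ⟨j, rfl⟩ := Nat.exists_eq_add_of_le hi₁
    rw [seqAppend_add _ _ _ hfg, add_assoc, seqAppend_add _ _ _ hfg]
    exact hgA j (by omega)

lemma HasWalk.append {a b c : Fin n} {l₁ l₂ : ℕ} (h₁ : HasWalk A a b l₁)
    (h₂ : HasWalk A b c l₂) : HasWalk A a c (l₁ + l₂) := by
  obtain ⟨f, hf⟩ := h₁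
  obtain ⟨g, hg⟩ := h₂
  exact ⟨_, IsWalkSeq.append hf hg⟩

lemma hasWalk_zero (a : Fin n) : HasWalk A a a 0 :=
  ⟨fun _ => a, rfl, rfl, fun _ hi => absurd hi (Nat.not_lt_zero _)⟩

lemma hasWalk_one {a b : Fin n} (hab : A a b) : HasWalk A a b 1 :=
  ⟨fun i => if i = 0 then a else b, rfl, rfl, fun i hi => by
    obtain rfl : i = 0 := by omega
    simpa using hab⟩

lemma Primitive.exists_adj_to (hA : Primitive A) (w : Fin n) : ∃ w', A w' w := by
  obtain ⟨p, hp, hwalk⟩ := hA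
  obtain ⟨f, -, hfp, hfA⟩ := hwalk w w
  refine ⟨f (p - 1), ?_⟩
  simpa [Nat.sub_add_cancel hp, hfp] using hfA (p - 1) (by omega)

lemma Primitive.exists_hasWalk_to (hA : Primitive A) (m : ℕ) (w : Fin n) :
    ∃ w', HasWalk A w' w m := by
  induction m generalizing w with
  | zero => exact ⟨w, hasWalk_zero w⟩
  | succ m ih =>
    obtain ⟨w₁, hw₁⟩ := hA.exists_adj_to w
    obtain ⟨w', hw'⟩ := ih w₁
    exact ⟨w', hw'.append (hasWalk_one hw₁)⟩

lemma Primitive.hasWalk_ddist (hA : Primitive A) (a b : Fin n) : HasWalk A a b (ddist A a b) :=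
  let ⟨p, _, hwalk⟩ := hA
  Nat.sInf_mem (s := {l | HasWalk A a b l}) ⟨p, hwalk a b⟩

lemma ddist_le_diam (A : Fin n → Fin n → Prop) (a b : Fin n) : ddist A a b ≤ diam A := by
  refine le_csSup ((Set.finite_range fun q : Fin n × Fin n => ddist A q.1 q.2).subset ?_).bddAbove
    ⟨a, b, rfl⟩
  rintro _ ⟨a, b, rfl⟩
  exact ⟨(a, b), rfl⟩

lemma setExp_le_upperMultiexp (A : Fin n → Fin n → Prop) {X : Finset (Fin n)} {k : ℕ}
    (hX : X.card = k) : setExp A X ≤ upperMultiexp A k := by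
  refine le_csSup ((Set.finite_range (setExp A)).subset ?_).bddAbove ⟨X, hX, rfl⟩
  rintro _ ⟨Y, -, rfl⟩
  exact ⟨Y, rfl⟩

lemma Primitive.exists_hasWalk_of_setExp_le (hA : Primitive A) {X : Finset (Fin n)}
    (hX : X.Nonempty) {q : ℕ} (hq : setExp A X ≤ q) (w : Fin n) :
    ∃ x ∈ X, HasWalk A x w q := by
  have hcover : ∀ w, ∃ x ∈ X, HasWalk A x w (setExp A X) := by
    obtain ⟨p, _, hwalk⟩ := hA
    obtain ⟨x₀, hx₀⟩ := hX
    exact Nat.sInf_mem (s := {p | ∀ w, ∃ x ∈ X, HasWalk A x w p})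
      ⟨p, fun w => ⟨x₀, hx₀, hwalk x₀ w⟩⟩
  obtain ⟨w', hw'⟩ := hA.exists_hasWalk_to (q - setExp A X) w
  obtain ⟨x, hx, hxw'⟩ := hcover w'
  refine ⟨x, hx, ?_⟩
  simpa [Nat.add_sub_cancel' hq] using hxw'.append hw'

end Walks

section SignedWalks

variable {n : ℕ} {S : Fin n → Fin n → ℤ}

lemma walkSign_seqAppend (S : Fin n → Fin n → ℤ) {f g : ℕ → Fin n} {l₁ : ℕ}
    (hfg : f l₁ = g 0) (l₂ : ℕ) :
    walkSign S (seqAppend f g l₁) (l₁ + l₂) = walkSign S f l₁ * walkSign S g l₂ := by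
  unfold walkSign
  rw [Finset.prod_range_add]
  congr 1
  · refine Finset.prod_congr rfl fun i hi => ?_
    have hi : i < l₁ := Finset.mem_range.mp hi
    rw [seqAppend_of_le _ _ _ hi.le, seqAppend_of_le _ _ _ hi]
  · refine Finset.prod_congr rfl fun j _ => ?_
    rw [seqAppend_add _ _ _ hfg, add_assoc, seqAppend_add _ _ _ hfg]

lemma IsWalkSeq.walkSign_ne_zero {f : ℕ → Fin n} {a b : Fin n} {l : ℕ}
    (hf : IsWalkSeq (Underlying S) f a b l) : walkSign S f l ≠ 0 :=
  Finset.prod_ne_zero_iff.mpr fun i hi => hf.2.2 i (Finset.mem_range.mp hi)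

lemma HasWalk.hasSSSD_append {a u v : Fin n} {l r : ℕ} (hw : HasWalk (Underlying S) a u l)
    (h : HasSSSD S u v r) : HasSSSD S a v (l + r) := by
  obtain ⟨e, he⟩ : ∃ e, IsWalkSeq (Underlying S) e a u l := hw
  obtain ⟨f, g, hf, hg, hfg⟩ := h
  refine ⟨_, _, he.append hf, he.append hg, ?_⟩
  rw [walkSign_seqAppend S (he.2.1.trans hf.1.symm), walkSign_seqAppend S (he.2.1.trans hg.1.symm)]
  exact fun h => hfg (mul_left_cancel₀ he.walkSign_ne_zero h)

lemma HasSSSD.append_hasWalk {u v w : Fin n} {r l : ℕ} (h : HasSSSD S u v r)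
    (hw : HasWalk (Underlying S) v w l) : HasSSSD S u w (r + l) := by
  obtain ⟨e, he⟩ : ∃ e, IsWalkSeq (Underlying S) e v w l := hw
  obtain ⟨f, g, hf, hg, hfg⟩ := h
  refine ⟨_, _, hf.append he, hg.append he, ?_⟩
  rw [walkSign_seqAppend S (hf.2.1.trans he.1.symm), walkSign_seqAppend S (hg.2.1.trans he.1.symm)]
  exact fun h => hfg (mul_right_cancel₀ he.walkSign_ne_zero h)

theorem setBase_le_setExp_add_diam_add (hS : Primitive (Underlying S)) {u v : Fin n} {r : ℕ}
    (huv : HasSSSD S u v r) {X : Finset (Fin n)} (hX : X.Nonempty) :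
    setBase S X ≤ setExp (Underlying S) X + diam (Underlying S) + r := by
  refine Nat.sInf_le fun w => ?_
  have hvw := ddist_le_diam (Underlying S) v w
  obtain ⟨x, hx, hxu⟩ := hS.exists_hasWalk_of_setExp_le hX
    (q := setExp (Underlying S) X + (diam (Underlying S) - ddist (Underlying S) v w)) (by omega) u
  refine ⟨x, hx, ?_⟩
  convert (hxu.hasSSSD_append huv).append_hasWalk (hS.hasWalk_ddist v w) using 1
  omega

end SignedWalks

theorem upperBase_le_of_SSSD_walk_general {n : ℕ} (S : Fin n → Fin n → ℤ)
    (hprim : Primitive (Underlying S))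
    (u v : Fin n) (r : ℕ) (hssd : HasSSSD S u v r)
    (k : ℕ) (hk1 : 1 ≤ k) :
    upperBase S k ≤ upperMultiexp (Underlying S) k + diam (Underlying S) + r := by
  refine csSup_le' ?_
  rintro _ ⟨X, hX, rfl⟩
  have hXne : X.Nonempty := Finset.card_pos.mp (by omega)
  calc setBase S X ≤ setExp (Underlying S) X + diam (Underlying S) + r :=
        setBase_le_setExp_add_diam_add hprim hssd hXne
    _ ≤ upperMultiexp (Underlying S) k + diam (Underlying S) + r := by
        gcongr
        exact setExp_le_upperMultiexp _ hX

/-- Lemma 3.2: if there is a pair of SSSD walks of length `r` from `u` to `v`, then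
`L(S,k) ≤ F(D,k) + d(D) + r`. -/
theorem upperBase_le_of_SSSD_walk {n : ℕ} (S : Fin n → Fin n → ℤ)
    (hsp : SignPattern S) (hprim : Primitive (Underlying S)) (hnp : NonPowerful S)
    (u v : Fin n) (r : ℕ) (hssd : HasSSSD S u v r)
    (k : ℕ) (hk1 : 1 ≤ k) (hkn : k ≤ n) :
    upperBase S k ≤ upperMultiexp (Underlying S) k + diam (Underlying S) + r :=
  upperBase_le_of_SSSD_walk_general S hprim u v r hssd k hk1
end

section
/- Let D₁ be the digraph on vertices {1,...,n} consisting of a Hamiltonian cycle 1→2→⋯→n→1 together with the extra arc (n-1)→1, so D₁ has exactly two cycles, of lengths n and n-1. Let 1 ≤ k ≤ n and X ⊆ V(D₁) with |X| = k. Then for every integer l ≥ (n-k)(n-1) and every vertex i with 1 ≤ i ≤ n-1, there exists a walk of length l in D₁ from some vertex of X to i. -/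
/-!
Let `S l` be the set of vertices from which `i` is reached by a walk of length `l`. Walking once
round the long cycle maps `S l` injectively (by `x ↦ x + 1`) into `S (n - 1 + l)`, and walking
once round the short cycle keeps every vertex of `S l` other than the last one in `S (n - 1 + l)`.
Since `i` lies on the short cycle, the last vertex lies in `S l` only together with its
predecessor; so unless `S l` is everything, some vertex of `S l` on the short cycle has its
predecessor outside `S l` and is a new element of `S (n - 1 + l)`. Hence
`#S (q (n - 1) + r) ≥ min (q + 1) n`, and for `q = n - k` this set is too large to miss `X`.
-/

open Finset

section Walks

variable {n : ℕ} {A : Fin n → Fin n → Prop}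

theorem hasWalk_zero_s9 {u v : Fin n} : HasWalk A u v 0 ↔ u = v :=
  ⟨fun ⟨f, h0, h1, _⟩ => h0.symm.trans h1, fun h => ⟨fun _ => u, rfl, h, by simp⟩⟩

theorem hasWalk_succ {u v : Fin n} {l : ℕ} :
    HasWalk A u v (l + 1) ↔ ∃ w, A u w ∧ HasWalk A w v l := by
  constructor
  · rintro ⟨f, h0, hl, hA⟩
    exact ⟨f 1, h0 ▸ hA 0 (by omega), fun j => f (j + 1), rfl, by simpa [add_comm] using hl,
      fun j hj => hA (j + 1) (by omega)⟩
  · rintro ⟨w, huw, f, h0, hl, hA⟩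
    refine ⟨fun j => if j = 0 then u else f (j - 1), by simp, by simpa using hl, ?_⟩
    rintro (_ | j) hj
    · simpa [h0] using huw
    · simpa using hA j (by omega)

theorem HasWalk.append_s9 {u v w : Fin n} {l m : ℕ} (huv : HasWalk A u v l)
    (hvw : HasWalk A v w m) : HasWalk A u w (l + m) := by
  induction l generalizing u with
  | zero => rwa [hasWalk_zero_s9.1 huv, zero_add]
  | succ l ih =>
    obtain ⟨x, hux, hxv⟩ := hasWalk_succ.1 huv
    rw [add_right_comm]
    exact hasWalk_succ.2 ⟨x, hux, ih hxv⟩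

variable (A) in
open Classical in
noncomputable def walkSources (v : Fin n) (l : ℕ) : Finset (Fin n) :=
  {u | HasWalk A u v l}

@[simp]
theorem mem_walkSources {u v : Fin n} {l : ℕ} : u ∈ walkSources A v l ↔ HasWalk A u v l := by
  simp [walkSources]

theorem walkSources_nonempty (hA : ∀ v, ∃ u, A u v) (v : Fin n) (l : ℕ) :
    (walkSources A v l).Nonempty := by
  induction l with
  | zero => exact ⟨v, mem_walkSources.2 (hasWalk_zero_s9.2 rfl)⟩
  | succ l ih =>
    obtain ⟨w, hw⟩ := ih
    obtain ⟨u, hu⟩ := hA w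
    exact ⟨u, mem_walkSources.2 (hasWalk_succ.2 ⟨w, hu, mem_walkSources.1 hw⟩)⟩

end Walks

open Fin.NatCast in
theorem Finset.eq_univ_of_forall_mem_of_finRotate_mem {n : ℕ} {s : Finset (Fin n)}
    (hs : s.Nonempty) (h : ∀ b, finRotate n b ∈ s → b ∈ s) : s = univ := by
  obtain ⟨a, ha⟩ := hs
  obtain ⟨m, rfl⟩ : ∃ m, n = m + 1 := ⟨n - 1, by have := a.isLt; omega⟩
  have key : ∀ j : ℕ, ∀ b : Fin (m + 1), b + (j : Fin (m + 1)) ∈ s → b ∈ s := by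
    intro j
    induction j with
    | zero => simp
    | succ j ih =>
      intro b hb
      refine h b (ih _ ?_)
      rwa [finRotate_apply, add_assoc, add_comm 1, ← Nat.cast_succ]
  refine eq_univ_of_forall fun b => key (a - b).val b ?_
  rwa [Fin.cast_val_eq_self, add_sub_cancel]

section D1

variable {n : ℕ}

theorem D1_finRotate (b : Fin n) : D1 n b (finRotate n b) := by
  obtain ⟨m, rfl⟩ : ∃ m, n = m + 1 := ⟨n - 1, by have := b.isLt; omega⟩
  rw [D1, coe_finRotate]
  split_ifs with h
  · exact Or.inr (Or.inl ⟨by simp [h], rfl⟩)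
  · exact Or.inl rfl

theorem hasWalk_D1_of_le {a b : Fin n} (hab : a ≤ b) : HasWalk (D1 n) a b (b - a : ℕ) := by
  obtain ⟨d, hd⟩ : ∃ d, (b : ℕ) = a + d := ⟨b - a, by omega⟩
  clear hab
  rw [hd, Nat.add_sub_cancel_left]
  induction d generalizing a with
  | zero => exact hasWalk_zero_s9.2 (Fin.ext hd.symm)
  | succ d ih =>
    exact hasWalk_succ.2 ⟨⟨a + 1, by omega⟩, Or.inl rfl, ih (a := ⟨a + 1, _⟩) (by dsimp; omega)⟩

theorem D1_to_zero {u v : Fin n} (hu : (u : ℕ) = n - 1 ∨ (u : ℕ) = n - 2) (hv : (v : ℕ) = 0) :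
    D1 n u v := by
  rcases hu with hu | hu
  · exact Or.inr (Or.inl ⟨hu, hv⟩)
  · exact Or.inr (Or.inr ⟨hu, hv⟩)

theorem eq_zero_of_D1_of_eq_last {u v : Fin n} (hu : (u : ℕ) = n - 1) (h : D1 n u v) :
    (v : ℕ) = 0 := by
  have := v.isLt
  rcases h with h | h | h <;> omega

theorem hasWalk_D1_self {x : Fin n} (hx : (x : ℕ) < n - 1) : HasWalk (D1 n) x x (n - 1) := by
  let y : Fin n := ⟨n - 2, by omega⟩
  let z : Fin n := ⟨0, by omega⟩
  have hxy : HasWalk (D1 n) x y (n - 2 - x) :=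
    hasWalk_D1_of_le (Fin.le_iff_val_le_val.2 (by simp only [y]; omega))
  have hyz : HasWalk (D1 n) y z 1 :=
    hasWalk_succ.2 ⟨z, D1_to_zero (Or.inr rfl) rfl, hasWalk_zero_s9.2 rfl⟩
  have hzx : HasWalk (D1 n) z x x := hasWalk_D1_of_le (Fin.le_iff_val_le_val.2 (Nat.zero_le _))
  convert (hxy.append_s9 hyz).append_s9 hzx using 1
  omega

theorem hasWalk_D1_finRotate (x : Fin n) : HasWalk (D1 n) (finRotate n x) x (n - 1) := by
  obtain ⟨m, rfl⟩ : ∃ m, n = m + 1 := ⟨n - 1, by have := x.isLt; omega⟩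
  by_cases hx : x = Fin.last m
  · subst hx
    simpa [finRotate_last] using hasWalk_D1_of_le (Fin.zero_le (Fin.last m))
  · have hlt : (x : ℕ) < m := Fin.val_lt_last hx
    let z : Fin (m + 1) := ⟨0, by omega⟩
    have hxy : HasWalk (D1 (m + 1)) (finRotate _ x) (Fin.last m) (m - (x + 1)) := by
      simpa only [Fin.val_last, coe_finRotate_of_ne_last hx] using
        hasWalk_D1_of_le (Fin.le_last (finRotate _ x))
    have hyz : HasWalk (D1 (m + 1)) (Fin.last m) z 1 :=
      hasWalk_succ.2 ⟨z, D1_to_zero (Or.inl (by simp)) rfl, hasWalk_zero_s9.2 rfl⟩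
    have hzx : HasWalk (D1 (m + 1)) z x x :=
      hasWalk_D1_of_le (Fin.le_iff_val_le_val.2 (Nat.zero_le _))
    convert (hxy.append_s9 hyz).append_s9 hzx using 1
    omega

theorem D1_finRotate_symm (v : Fin n) : D1 n ((finRotate n).symm v) v := by
  have h := D1_finRotate ((finRotate n).symm v)
  rwa [Equiv.apply_symm_apply] at h

/-- The only arc out of the last vertex goes to `0`, which its predecessor also enters. -/
theorem mem_walkSources_D1_of_finRotate_mem {i : Fin n} (hi : (i : ℕ) < n - 1) {l : ℕ}
    {b : Fin n} (hb : (finRotate n b : ℕ) = n - 1)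
    (h : finRotate n b ∈ walkSources (D1 n) i l) : b ∈ walkSources (D1 n) i l := by
  have hb' : (b : ℕ) = n - 2 := by
    have := D1_finRotate b
    rcases this with h | h | h <;> omega
  cases l with
  | zero => exact absurd (congrArg Fin.val (hasWalk_zero_s9.1 (mem_walkSources.1 h))) (by omega)
  | succ l =>
    obtain ⟨w, hw, hwi⟩ := hasWalk_succ.1 (mem_walkSources.1 h)
    exact mem_walkSources.2 (hasWalk_succ.2
      ⟨w, D1_to_zero (Or.inr hb') (eq_zero_of_D1_of_eq_last hb hw), hwi⟩)

theorem card_walkSources_D1_add {i : Fin n} (hi : (i : ℕ) < n - 1) (l : ℕ) :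
    min (#(walkSources (D1 n) i l) + 1) n ≤ #(walkSources (D1 n) i (n - 1 + l)) := by
  set S := walkSources (D1 n) i l
  set S' := walkSources (D1 n) i (n - 1 + l)
  have hmap : S.map (finRotate n).toEmbedding ⊆ S' := by
    intro a ha
    obtain ⟨b, hb, rfl⟩ := mem_map.1 ha
    exact mem_walkSources.2 ((hasWalk_D1_finRotate b).append_s9 (mem_walkSources.1 hb))
  by_cases hS : S = univ
  · calc min (#S + 1) n ≤ n := min_le_right _ _
      _ = #(S.map (finRotate n).toEmbedding) := by simp [hS]
      _ ≤ #S' := card_le_card hmap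
  obtain ⟨b, hσb, hlt, hb⟩ : ∃ b, finRotate n b ∈ S ∧ (finRotate n b : ℕ) < n - 1 ∧ b ∉ S := by
    by_contra! hclosed
    refine hS (eq_univ_of_forall_mem_of_finRotate_mem
      (walkSources_nonempty (fun v => ⟨_, D1_finRotate_symm v⟩) i l) fun b hσb => ?_)
    by_cases hlt : (finRotate n b : ℕ) < n - 1
    · exact hclosed b hσb hlt
    · exact mem_walkSources_D1_of_finRotate_mem hi (by have := (finRotate n b).isLt; omega) hσb
  have hfresh : finRotate n b ∉ S.map (finRotate n).toEmbedding := (mem_map' _).not.2 hb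
  have hsub : insert (finRotate n b) (S.map (finRotate n).toEmbedding) ⊆ S' :=
    insert_subset
      (mem_walkSources.2 ((hasWalk_D1_self hlt).append_s9 (mem_walkSources.1 hσb))) hmap
  calc min (#S + 1) n ≤ #S + 1 := min_le_left _ _
    _ = #(insert (finRotate n b) (S.map (finRotate n).toEmbedding)) := by
      rw [card_insert_of_notMem hfresh, card_map]
    _ ≤ #S' := card_le_card hsub

theorem card_walkSources_D1 {i : Fin n} (hi : (i : ℕ) < n - 1) (q r : ℕ) :
    min (q + 1) n ≤ #(walkSources (D1 n) i (q * (n - 1) + r)) := by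
  induction q with
  | zero =>
    have := card_pos.2 (walkSources_nonempty (fun v => ⟨_, D1_finRotate_symm v⟩) i r)
    simp only [zero_mul, zero_add]
    omega
  | succ q ih =>
    calc min (q + 1 + 1) n ≤ min (#(walkSources (D1 n) i (q * (n - 1) + r)) + 1) n := by omega
      _ ≤ _ := card_walkSources_D1_add hi _
      _ = _ := by rw [add_mul, one_mul, add_right_comm, add_comm (n - 1)]

end D1

theorem D1_walk_lemma_general {n : ℕ} (k : ℕ) (hk1 : 1 ≤ k)
    (X : Finset (Fin n)) (hX : X.card = k) (l : ℕ) (hl : (n - k) * (n - 1) ≤ l)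
    (i : Fin n) (hi : i.val < n - 1) :
    ∃ x ∈ X, HasWalk (D1 n) x i l := by
  have hS : n - k + 1 ≤ #(walkSources (D1 n) i l) := by
    have := card_walkSources_D1 hi (n - k) (l - (n - k) * (n - 1))
    rwa [Nat.add_sub_cancel' hl, min_eq_left (by omega)] at this
  obtain ⟨x, hx⟩ := inter_nonempty_of_card_lt_card_add_card (subset_univ X)
    (subset_univ (walkSources (D1 n) i l)) (by rw [card_univ, Fintype.card_fin]; omega)
  exact ⟨x, (mem_inter.1 hx).1, mem_walkSources.1 (mem_inter.1 hx).2⟩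

/-- Lemma 3.1: in `D₁`, for every `l ≥ (n-k)(n-1)` and every vertex `i` with
`1 ≤ i ≤ n-1` (index `< n-1`), there is a walk of length `l` from some vertex of
`X` to `i`. -/
theorem D1_walk_lemma {n : ℕ} (hn : 2 ≤ n) (k : ℕ) (hk1 : 1 ≤ k) (hkn : k ≤ n)
    (X : Finset (Fin n)) (hX : X.card = k) (l : ℕ) (hl : (n - k) * (n - 1) ≤ l)
    (i : Fin n) (hi : i.val < n - 1) :
    ∃ x ∈ X, HasWalk (D1 n) x i l :=
  D1_walk_lemma_general k hk1 X hX l hl i hi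
end

section
/- Let n ≥ 2 and let S₁ be any primitive non-powerful signed digraph whose underlying digraph is D₁ (the digraph on {1,...,n} with arcs (i,i+1) for 1 ≤ i ≤ n-1, (n,1), and (n-1,1)). Then the two closed walks W₁ = Q₁ + (n-1)·C_{n-1} and W₂ = Q₂ + (n-2)·C_n from vertex n-1 to vertex 1 (where Q₁ is the arc (n-1,1), Q₂ is the path (n-1,n),(n,1), C_{n-1} and C_n are the cycles of lengths n-1 and n) both have length (n-1)² + 1 and have opposite signs; i.e., there exists a pair of SSSD walks of length (n-1)² + 1 from vertex n-1 to vertex 1 in S₁. -/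
/-!
Write `n = m + 2`, let `σ, τ` be the signs of `C_{n-1}, C_n`, `P` the sign of the path
`0 → ⋯ → m`, and `a, b, c` the signs of the arcs `m → 0`, `m → m+1`, `m+1 → 0`, so that `σ = P a`
and `τ = P b c`. The walks `W₁, W₂` have signs `a σ^(n-1)` and `b c τ^(n-2)`; if these agreed,
multiplying by `P` would give `σ^n = τ^(n-1)`. Then `ε = σ τ` satisfies `ε^(n-1) = σ` and
`ε^n = τ`, and switching each vertex `v` by `ε^v` times the sign of the path `0 → ⋯ → v` turns
every arc sign into `ε`. In such a signed digraph the sign of a walk depends only on its endpoints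
and length, so there are no SSSD walks at all, contradicting non-powerfulness.
-/

open Finset

section Walks

variable {n : ℕ}

def walkCons {α : Type*} (x : α) (f : ℕ → α) : ℕ → α
  | 0 => x
  | k + 1 => f k

lemma IsWalkSeq.walkCons {A : Fin n → Fin n → Prop} {f : ℕ → Fin n} {x u v : Fin n} {l : ℕ}
    (hf : IsWalkSeq A f u v l) (hx : A x u) : IsWalkSeq A (walkCons x f) x v (l + 1) := by
  obtain ⟨rfl, rfl, hf⟩ := hf
  refine ⟨rfl, rfl, fun i hi => ?_⟩
  cases i with
  | zero => exact hx
  | succ i => exact hf i (by omega)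

variable (S : Fin n → Fin n → ℤ)

lemma walkSign_walkCons (x : Fin n) (f : ℕ → Fin n) (l : ℕ) :
    walkSign S (walkCons x f) (l + 1) = S x (f 0) * walkSign S f l := by
  rw [walkSign, prod_range_succ', mul_comm]
  rfl

lemma walkSign_succ (f : ℕ → Fin n) (l : ℕ) :
    walkSign S f (l + 1) = walkSign S f l * S (f l) (f (l + 1)) :=
  prod_range_succ _ _

variable {S}

lemma walkSign_congr {f g : ℕ → Fin n} {l : ℕ} (h : ∀ i ≤ l, f i = g i) :
    walkSign S f l = walkSign S g l :=
  prod_congr rfl fun i hi => by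
    rw [mem_range] at hi
    rw [h i hi.le, h (i + 1) hi]

lemma walkSign_mul_of_periodic {f : ℕ → Fin n} {p : ℕ} (hf : Function.Periodic f p) (k : ℕ) :
    walkSign S f (k * p) = walkSign S f p ^ k := by
  induction k with
  | zero => simp [walkSign]
  | succ k ih =>
    rw [add_one_mul, walkSign, prod_range_add, ← walkSign, ih, pow_succ]
    congr 1
    have hshift (i : ℕ) : f (k * p + i) = f i := by simpa [add_comm] using hf.nat_mul k i
    exact prod_congr rfl fun i _ => by rw [hshift, add_assoc, hshift]

lemma walkSign_sq (hsp : SignPattern S) {f : ℕ → Fin n} {l : ℕ}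
    (hf : ∀ i < l, Underlying S (f i) (f (i + 1))) : walkSign S f l ^ 2 = 1 := by
  rw [walkSign, ← prod_pow]
  refine prod_eq_one fun i hi => ?_
  rcases hsp (f i) (f (i + 1)) with h | h | h
  · exact absurd h (hf i (mem_range.1 hi))
  all_goals rw [h]; norm_num

lemma walkSign_eq_of_switching {θ : Fin n → ℤ} {ε : ℤ} (hθ : ∀ v, θ v ^ 2 = 1)
    (hS : ∀ u v, S u v ≠ 0 → S u v = θ u * θ v * ε) {f : ℕ → Fin n} {l : ℕ}
    (hf : ∀ i < l, Underlying S (f i) (f (i + 1))) :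
    walkSign S f l = θ (f 0) * θ (f l) * ε ^ l := by
  induction l with
  | zero => simp [walkSign, ← sq, hθ]
  | succ l ih =>
    rw [walkSign_succ, ih fun i hi => hf i (by omega), hS _ _ (hf l (by omega)), pow_succ]
    linear_combination θ (f 0) * θ (f (l + 1)) * ε ^ l * ε * hθ (f l)

lemma not_nonPowerful_of_switching {θ : Fin n → ℤ} {ε : ℤ} (hθ : ∀ v, θ v ^ 2 = 1)
    (hS : ∀ u v, S u v ≠ 0 → S u v = θ u * θ v * ε) : ¬ NonPowerful S := by
  rintro ⟨u, v, l, f, g, ⟨hf0, hfl, hf⟩, ⟨hg0, hgl, hg⟩, hne⟩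
  apply hne
  rw [walkSign_eq_of_switching hθ hS hf, walkSign_eq_of_switching hθ hS hg, hf0, hfl, hg0, hgl]

end Walks

section Cycles

variable {n : ℕ} [NeZero n]

def cycleWalk (n q : ℕ) [NeZero n] (k : ℕ) : Fin n := Fin.ofNat n (k % q)

def cycleSign (S : Fin n → Fin n → ℤ) (q : ℕ) : ℤ := walkSign S (cycleWalk n q) q

lemma cycleWalk_of_lt {q k : ℕ} (h : k < q) : cycleWalk n q k = Fin.ofNat n k := by
  rw [cycleWalk, Nat.mod_eq_of_lt h]

lemma cycleWalk_mul (q k : ℕ) : cycleWalk n q (k * q) = 0 := by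
  simp [cycleWalk]

lemma cycleWalk_zero (q : ℕ) : cycleWalk n q 0 = 0 := by
  simp [cycleWalk]

lemma cycleWalk_self (q : ℕ) : cycleWalk n q q = 0 := by
  simp [cycleWalk]

lemma cycleWalk_of_val_lt {q : ℕ} (v : Fin n) (hv : v.val < q) : cycleWalk n q v.val = v := by
  ext
  rw [cycleWalk, Fin.val_ofNat, Nat.mod_eq_of_lt hv, Nat.mod_eq_of_lt v.isLt]

lemma cycleWalk_periodic (q : ℕ) : Function.Periodic (cycleWalk n q) q := fun k => by
  simp [cycleWalk]

lemma val_cycleWalk {q : ℕ} (hq : 0 < q) (hqn : q ≤ n) (k : ℕ) :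
    (cycleWalk n q k).val = k % q := by
  rw [cycleWalk, Fin.val_ofNat, Nat.mod_eq_of_lt ((Nat.mod_lt k hq).trans_le hqn)]

end Cycles

namespace D1

variable {m : ℕ} {S : Fin (m + 2) → Fin (m + 2) → ℤ}

lemma adj_cycleWalk {q : ℕ} (hq : q = m + 1 ∨ q = m + 2) (k : ℕ) :
    D1 (m + 2) (cycleWalk (m + 2) q k) (cycleWalk (m + 2) q (k + 1)) := by
  have hq0 : 0 < q := by omega
  simp only [D1, val_cycleWalk hq0 (by omega : q ≤ m + 2)]
  obtain ⟨t, r, hr, rfl⟩ : ∃ t r, r < q ∧ k = t * q + r :=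
    ⟨k / q, k % q, Nat.mod_lt k hq0, (Nat.div_add_mod' k q).symm⟩
  rw [add_assoc, Nat.mul_add_mod_self_right, Nat.mul_add_mod_self_right, Nat.mod_eq_of_lt hr]
  rcases (show r + 1 ≤ q from hr).lt_or_eq with h | h
  · exact Or.inl (Nat.mod_eq_of_lt h)
  · rw [h, Nat.mod_self]
    omega

lemma isWalkSeq_cycleWalk (hund : ∀ u v, Underlying S u v ↔ D1 (m + 2) u v) {q : ℕ}
    (hq : q = m + 1 ∨ q = m + 2) (k : ℕ) :
    IsWalkSeq (Underlying S) (cycleWalk (m + 2) q) 0 0 (k * q) :=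
  ⟨cycleWalk_zero q, cycleWalk_mul q k, fun i _ => (hund _ _).2 (adj_cycleWalk hq i)⟩

lemma walkSign_cycleWalk_sq (hsp : SignPattern S) (hund : ∀ u v, Underlying S u v ↔ D1 (m + 2) u v)
    {q : ℕ} (hq : q = m + 1 ∨ q = m + 2) (l : ℕ) : walkSign S (cycleWalk (m + 2) q) l ^ 2 = 1 :=
  walkSign_sq hsp fun i _ => (hund _ _).2 (adj_cycleWalk hq i)

/-- `W₁ = Q₁ + (n-1)·C_{n-1}`, with `n = m + 2`. -/
def walk₁ (m : ℕ) : ℕ → Fin (m + 2) := walkCons ⟨m, by omega⟩ (cycleWalk (m + 2) (m + 1))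

/-- `W₂ = Q₂ + (n-2)·C_n`, with `n = m + 2`. -/
def walk₂ (m : ℕ) : ℕ → Fin (m + 2) :=
  walkCons ⟨m, by omega⟩ (walkCons ⟨m + 1, by omega⟩ (cycleWalk (m + 2) (m + 2)))

lemma isWalkSeq_walk₁ (hund : ∀ u v, Underlying S u v ↔ D1 (m + 2) u v) :
    IsWalkSeq (Underlying S) (walk₁ m) ⟨m, by omega⟩ 0 ((m + 1) ^ 2 + 1) := by
  rw [sq]
  exact (isWalkSeq_cycleWalk hund (Or.inl rfl) (m + 1)).walkCons ((hund _ _).2 (by simp [D1]))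

lemma isWalkSeq_walk₂ (hund : ∀ u v, Underlying S u v ↔ D1 (m + 2) u v) :
    IsWalkSeq (Underlying S) (walk₂ m) ⟨m, by omega⟩ 0 ((m + 1) ^ 2 + 1) := by
  rw [show (m + 1) ^ 2 + 1 = m * (m + 2) + 1 + 1 by ring]
  exact ((isWalkSeq_cycleWalk hund (Or.inr rfl) m).walkCons ((hund _ _).2 (by simp [D1]))).walkCons
    ((hund _ _).2 (by simp [D1]))

lemma walkSign_walk₁ :
    walkSign S (walk₁ m) ((m + 1) ^ 2 + 1) = S ⟨m, by omega⟩ 0 * cycleSign S (m + 1) ^ (m + 1) := by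
  rw [walk₁, sq, walkSign_walkCons, walkSign_mul_of_periodic (cycleWalk_periodic _), cycleSign,
    cycleWalk_zero]

lemma walkSign_walk₂ :
    walkSign S (walk₂ m) ((m + 1) ^ 2 + 1) =
      S ⟨m, by omega⟩ ⟨m + 1, by omega⟩ * (S ⟨m + 1, by omega⟩ 0 * cycleSign S (m + 2) ^ m) := by
  rw [walk₂, show (m + 1) ^ 2 + 1 = m * (m + 2) + 1 + 1 by ring, walkSign_walkCons,
    walkSign_walkCons, walkSign_mul_of_periodic (cycleWalk_periodic _), cycleSign, cycleWalk_zero]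
  rfl

variable (S) in
def pathSign (k : ℕ) : ℤ := walkSign S (cycleWalk (m + 2) (m + 2)) k

lemma pathSign_of_val_eq_succ {u v : Fin (m + 2)} (huv : v.val = u.val + 1) :
    pathSign S v.val = pathSign S u.val * S u v := by
  rw [pathSign, pathSign, huv, walkSign_succ, cycleWalk_of_val_lt u u.isLt, ← huv,
    cycleWalk_of_val_lt v v.isLt]

lemma cycleSign_add_one : cycleSign S (m + 1) = pathSign S m * S ⟨m, by omega⟩ 0 := by
  rw [cycleSign, walkSign_succ, cycleWalk_self, pathSign,
    walkSign_congr (g := cycleWalk (m + 2) (m + 2)) fun i hi => by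
      rw [cycleWalk_of_lt (by omega : i < m + 1), cycleWalk_of_lt (by omega : i < m + 2)]]
  congr
  exact cycleWalk_of_val_lt (q := m + 1) (⟨m, by omega⟩ : Fin (m + 2)) (by simp)

lemma cycleSign_add_two : cycleSign S (m + 2) = pathSign S (m + 1) * S ⟨m + 1, by omega⟩ 0 := by
  rw [cycleSign, walkSign_succ, cycleWalk_self, pathSign]
  congr
  exact cycleWalk_of_val_lt (q := m + 2) (⟨m + 1, by omega⟩ : Fin (m + 2)) (by simp)

lemma cycleSign_pow_eq_of_walkSign_eq
    (h : walkSign S (walk₁ m) ((m + 1) ^ 2 + 1) = walkSign S (walk₂ m) ((m + 1) ^ 2 + 1)) :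
    cycleSign S (m + 1) ^ (m + 2) = cycleSign S (m + 2) ^ (m + 1) := by
  rw [walkSign_walk₁, walkSign_walk₂] at h
  have hτ : cycleSign S (m + 2) =
      pathSign S m * S ⟨m, by omega⟩ ⟨m + 1, by omega⟩ * S ⟨m + 1, by omega⟩ 0 := by
    rw [cycleSign_add_two,
      pathSign_of_val_eq_succ (u := ⟨m, by omega⟩) (v := ⟨m + 1, by omega⟩) rfl]
  linear_combination cycleSign S (m + 1) ^ (m + 1) * cycleSign_add_one (S := S) +
    pathSign S m * h - cycleSign S (m + 2) ^ m * hτ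

variable (S) in
def potential (v : Fin (m + 2)) : ℤ :=
  (cycleSign S (m + 1) * cycleSign S (m + 2)) ^ v.val * pathSign S v.val

section SignPattern

variable (hsp : SignPattern S) (hund : ∀ u v, Underlying S u v ↔ D1 (m + 2) u v)
include hsp hund

lemma pathSign_sq (k : ℕ) : pathSign S k ^ 2 = 1 :=
  walkSign_cycleWalk_sq hsp hund (Or.inr rfl) k

lemma cycleSign_add_one_sq : cycleSign S (m + 1) ^ 2 = 1 :=
  walkSign_cycleWalk_sq hsp hund (Or.inl rfl) _

lemma cycleSign_add_two_sq : cycleSign S (m + 2) ^ 2 = 1 :=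
  walkSign_cycleWalk_sq hsp hund (Or.inr rfl) _

lemma pow_sq_cycleSign_mul_cycleSign (k : ℕ) :
    ((cycleSign S (m + 1) * cycleSign S (m + 2)) ^ k) ^ 2 = 1 := by
  rw [← pow_mul, pow_mul', mul_pow, cycleSign_add_one_sq hsp hund, cycleSign_add_two_sq hsp hund,
    one_mul, one_pow]

lemma potential_sq (v : Fin (m + 2)) : potential S v ^ 2 = 1 := by
  rw [potential, mul_pow, pow_sq_cycleSign_mul_cycleSign hsp hund, pathSign_sq hsp hund, one_mul]

section Balanced

variable (h : cycleSign S (m + 1) ^ (m + 2) = cycleSign S (m + 2) ^ (m + 1))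
include h

lemma cycleSign_mul_pow_add_one :
    (cycleSign S (m + 1) * cycleSign S (m + 2)) ^ (m + 1) = cycleSign S (m + 1) := by
  have hσ : (cycleSign S (m + 1) ^ 2) ^ (m + 1) = 1 := by
    rw [cycleSign_add_one_sq hsp hund, one_pow]
  linear_combination (-cycleSign S (m + 1) ^ (m + 1)) * h + cycleSign S (m + 1) * hσ

lemma cycleSign_mul_pow_add_two :
    (cycleSign S (m + 1) * cycleSign S (m + 2)) ^ (m + 2) = cycleSign S (m + 2) := by
  have hτ : (cycleSign S (m + 2) ^ 2) ^ (m + 1) = 1 := by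
    rw [cycleSign_add_two_sq hsp hund, one_pow]
  linear_combination cycleSign S (m + 2) ^ (m + 2) * h + cycleSign S (m + 2) * hτ

lemma sign_eq_potential_mul (u v : Fin (m + 2)) (huv : S u v ≠ 0) :
    S u v = potential S u * potential S v * (cycleSign S (m + 1) * cycleSign S (m + 2)) := by
  have hp := pathSign_sq hsp hund
  have hpot₀ : potential S 0 = 1 := by simp [potential, pathSign, walkSign]
  rcases (hund u v).1 huv with hsucc | ⟨hu, hv⟩ | ⟨hu, hv⟩
  · rw [potential, potential, pathSign_of_val_eq_succ hsucc, hsucc]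
    linear_combination (-(pathSign S u.val ^ 2 * S u v)) *
      pow_sq_cycleSign_mul_cycleSign hsp hund (u.val + 1) - S u v * hp u.val
  · obtain rfl : u = ⟨m + 1, Nat.lt_add_one _⟩ := Fin.ext (by simp only; omega)
    obtain rfl : v = 0 := Fin.ext hv
    rw [hpot₀, potential]
    linear_combination (-pathSign S (m + 1)) * cycleSign_mul_pow_add_two hsp hund h -
      pathSign S (m + 1) * cycleSign_add_two - S ⟨m + 1, _⟩ 0 * hp (m + 1)
  · obtain rfl : u = ⟨m, by simp⟩ := Fin.ext (by simp only; omega)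
    obtain rfl : v = 0 := Fin.ext hv
    rw [hpot₀, potential]
    linear_combination (-pathSign S m) * cycleSign_mul_pow_add_one hsp hund h -
      pathSign S m * cycleSign_add_one - S ⟨m, _⟩ 0 * hp m

lemma not_nonPowerful_of_cycleSign_pow_eq : ¬ NonPowerful S :=
  not_nonPowerful_of_switching (potential_sq hsp hund) (sign_eq_potential_mul hsp hund h)

end Balanced

end SignPattern

end D1

/-- In a primitive non-powerful signed digraph with underlying digraph `D₁`, there
is a pair of SSSD walks of length `(n-1)² + 1` from vertex `n-1` (index `n-2`) to
vertex `1` (index `0`). -/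
theorem D1_SSSD_walk {n : ℕ} (hn : 2 ≤ n) (S : Fin n → Fin n → ℤ)
    (hsp : SignPattern S) (hund : ∀ u v, Underlying S u v ↔ D1 n u v)
    (hnp : NonPowerful S) :
    HasSSSD S ⟨n - 2, by omega⟩ ⟨0, by omega⟩ ((n - 1) ^ 2 + 1) := by
  obtain ⟨m, rfl⟩ : ∃ m, n = m + 2 := ⟨n - 2, by omega⟩
  refine ⟨D1.walk₁ m, D1.walk₂ m, D1.isWalkSeq_walk₁ hund, D1.isWalkSeq_walk₂ hund, fun h => ?_⟩
  exact D1.not_nonPowerful_of_cycleSign_pow_eq hsp hund (D1.cycleSign_pow_eq_of_walkSign_eq h) hnp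
end
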